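/- Let k be a commutative noetherian ring, let (P_i)_{i ∈ I} be an inverse system of projective k-modules indexed by a cofiltered small category I, and let J be an injective k-module. Then the k-module colim_{i ∈ I^op} Hom_k(P_i, J) (the filtered colimit of the Hom modules along the inverse system) is injective. -/

import Mathlib

/-!
Over a noetherian ring every ideal is finitely presented, so a linear map from an ideal into a
filtered colimit of modules factors through some stage. Hence Baer's criterion passes from the
stages to the colimit: a filtered colimit of injective modules is injective. The stages
`Hom_k(P_i, J)` are injective because `P_i` is flat and, by tensor-hom adjunction, extending maps
into `Hom_k(P_i, J)` along an injection `X → Y` amounts to extending maps into `J` along the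
injection `X ⊗ P_i → Y ⊗ P_i`.
-/

open CategoryTheory CategoryTheory.Limits

universe v in
lemma Module.injective_linearMap_of_flat {k : Type*} [CommRing k] {M J : Type v}
    [AddCommGroup M] [Module k M] [Module.Flat k M]
    [AddCommGroup J] [Module k J] [Module.Injective k J] :
    Module.Injective k (M →ₗ[k] J) where
  out X Y _ _ _ _ i hi f := by
    obtain ⟨g, hg⟩ := Module.Injective.out (i.rTensor M)
      (Module.Flat.rTensor_preserves_injective_linearMap i hi) (TensorProduct.lift f)
    exact ⟨TensorProduct.curry g, fun x ↦ LinearMap.ext fun p ↦ by simpa using hg (x ⊗ₜ p)⟩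

namespace ModuleCat

universe u
variable {R : Type u} [Ring R] {ι : Type u} [SmallCategory ι] (F : ι ⥤ ModuleCat.{u} R)

lemma range_ι_le_range_ι {i j : ι} (f : i ⟶ j) :
    LinearMap.range (colimit.ι F i).hom ≤ LinearMap.range (colimit.ι F j).hom := by
  rw [← colimit.w F f]
  exact LinearMap.range_comp_le_range _ _

lemma ker_map_le_ker_map_comp {i j j' : ι} (u : i ⟶ j) (v : j ⟶ j') :
    LinearMap.ker (F.map u).hom ≤ LinearMap.ker (F.map (u ≫ v)).hom := by
  rw [F.map_comp, hom_comp]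
  exact LinearMap.ker_le_ker_comp _ _

variable [IsFiltered ι]

lemma exists_le_range_ι_of_fg {N : Submodule R ↑(colimit F)} (hN : N.FG) :
    ∃ j, N ≤ LinearMap.range (colimit.ι F j).hom := by
  classical
  obtain ⟨s, rfl⟩ := hN
  induction s using Finset.induction_on with
  | empty => exact ⟨IsFiltered.nonempty.some, by simp⟩
  | insert x s _ ih =>
    obtain ⟨i, hi⟩ := ih
    obtain ⟨j, y, rfl⟩ := Concrete.colimit_exists_rep F x
    refine ⟨IsFiltered.max i j, ?_⟩
    rw [Finset.coe_insert, Submodule.span_insert, sup_le_iff, Submodule.span_singleton_le_iff_mem]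
    exact ⟨range_ι_le_range_ι F (IsFiltered.rightToMax i j) (LinearMap.mem_range_self _ y),
      hi.trans (range_ι_le_range_ι F (IsFiltered.leftToMax i j))⟩

lemma exists_le_ker_map_of_fg {i : ι} {K : Submodule R (F.obj i)} (hK : K.FG)
    (h : K ≤ LinearMap.ker (colimit.ι F i).hom) :
    ∃ (j : ι) (u : i ⟶ j), K ≤ LinearMap.ker (F.map u).hom := by
  classical
  obtain ⟨s, rfl⟩ := hK
  induction s using Finset.induction_on with
  | empty => exact ⟨i, 𝟙 i, by simp⟩
  | insert x s _ ih =>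
    simp only [Finset.coe_insert, Submodule.span_insert, sup_le_iff,
      Submodule.span_singleton_le_iff_mem, LinearMap.mem_ker] at h ⊢
    obtain ⟨j, u, hu⟩ := ih h.2
    obtain ⟨j', v, _, hv⟩ := Concrete.colimit_exists_of_rep_eq F x (0 : F.obj i)
      (by rw [h.1, map_zero])
    -- `u` kills `s` and `v` kills `x`; coequalize the two resulting maps `i ⟶ max j j'`.
    let l := IsFiltered.leftToMax j j'
    let r := IsFiltered.rightToMax j j'
    let c := IsFiltered.coeqHom (u ≫ l) (v ≫ r)
    have hc : u ≫ l ≫ c = v ≫ r ≫ c := by simpa using IsFiltered.coeq_condition (u ≫ l) (v ≫ r)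
    refine ⟨_, u ≫ l ≫ c, ?_, hu.trans (ker_map_le_ker_map_comp F _ _)⟩
    rw [hc]
    exact ker_map_le_ker_map_comp F v _ (hv.trans (map_zero _))

lemma exists_comp_ι_eq_of_projective {L : Type*} [AddCommGroup L] [Module R L]
    [Module.Projective R L] [Module.Finite R L] (f : L →ₗ[R] ↑(colimit F)) :
    ∃ (j : ι) (g : L →ₗ[R] F.obj j), (colimit.ι F j).hom ∘ₗ g = f := by
  obtain ⟨j, hj⟩ := exists_le_range_ι_of_fg F ((Module.Finite.fg_top).map f)
  obtain ⟨g, hg⟩ := Module.projective_lifting_property (colimit.ι F j).hom.rangeRestrict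
    (f.codRestrict _ fun x ↦ hj (Submodule.mem_map_of_mem trivial))
    (colimit.ι F j).hom.surjective_rangeRestrict
  exact ⟨j, g, LinearMap.ext fun x ↦ congr_arg Subtype.val (LinearMap.congr_fun hg x)⟩

lemma exists_comp_ι_eq_of_finitePresentation {M : Type*} [AddCommGroup M] [Module R M]
    [Module.FinitePresentation R M] (f : M →ₗ[R] ↑(colimit F)) :
    ∃ (j : ι) (g : M →ₗ[R] F.obj j), (colimit.ι F j).hom ∘ₗ g = f := by
  obtain ⟨n, K, e, hK⟩ := Module.FinitePresentation.exists_fin R M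
  obtain ⟨i, g, hg⟩ := exists_comp_ι_eq_of_projective F (f ∘ₗ e.symm.toLinearMap ∘ₗ K.mkQ)
  have hgK : K.map g ≤ LinearMap.ker (colimit.ι F i).hom := by
    rw [Submodule.map_le_iff_le_comap, ← LinearMap.ker_comp, hg]
    intro x hx
    simp [(Submodule.Quotient.mk_eq_zero K).mpr hx]
  obtain ⟨j, u, hu⟩ := exists_le_ker_map_of_fg F (hK.map g) hgK
  refine ⟨j, K.liftQ ((F.map u).hom ∘ₗ g) ?_ ∘ₗ e.toLinearMap, ?_⟩
  · rwa [LinearMap.ker_comp, ← Submodule.map_le_iff_le_comap]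
  · refine (LinearMap.cancel_right e.symm.surjective).mp (Submodule.linearMap_qext K ?_)
    refine LinearMap.ext fun x ↦ ?_
    have := LinearMap.congr_fun hg x
    simp only [LinearMap.comp_apply, LinearEquiv.coe_coe, Submodule.mkQ_apply] at this ⊢
    rw [LinearEquiv.apply_symm_apply, Submodule.liftQ_apply, LinearMap.comp_apply, ← this,
      ← colimit.w F u]
    rfl

lemma injective_colimit_of_isNoetherianRing [IsNoetherianRing R]
    (hF : ∀ j, Module.Injective R (F.obj j)) : Module.Injective R ↑(colimit F) := by
  refine Module.Baer.injective fun I g ↦ ?_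
  have : Module.FinitePresentation R I := Module.finitePresentation_of_finite R I
  obtain ⟨j, g, rfl⟩ := exists_comp_ι_eq_of_finitePresentation F g
  obtain ⟨h, hh⟩ := Module.Baer.of_injective (hF j) I g
  exact ⟨(colimit.ι F j).hom ∘ₗ h, fun x hx ↦ by simp [hh x hx]⟩

end ModuleCat

/-- Let `k` be a commutative noetherian ring, `(P_i)_{i ∈ I}`
an inverse system of projective `k`-modules indexed by a cofiltered small
category `I`, and `J` an injective `k`-module.  Then the filtered colimit
`colim_{i ∈ Iᵒᵖ} Hom_k(P_i, J)` of the Hom modules along the inverse system is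
an injective `k`-module. -/
theorem stmt_8 (k : Type) [CommRing k] [IsNoetherianRing k]
    (I : Type) [SmallCategory I] [IsCofiltered I]
    (P : I ⥤ ModuleCat.{0} k)
    (hproj : ∀ i : I, Module.Projective k (P.obj i))
    (J : Type) [AddCommGroup J] [Module k J] [Module.Injective k J] :
    Injective
      (colimit (P.op ⋙ (linearYoneda k (ModuleCat.{0} k)).obj (ModuleCat.of k J))) := by
  refine Module.injective_object_of_injective_module k _ (inj := ?_)
  refine ModuleCat.injective_colimit_of_isNoetherianRing _ fun i ↦ ?_
  have := hproj i.unop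
  have hHom : Module.Injective k (P.obj i.unop →ₗ[k] J) := Module.injective_linearMap_of_flat
  exact ((Module.Baer.of_injective hHom).of_equiv ModuleCat.homLinearEquiv.symm).injective
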